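/- arXiv:1301.0761 — 3 statements merged into one kernel-verified Lean document; each statement's English description precedes it below -/
import Mathlib

section
/- The map O defined by O(t) = inf_{s>0} s ⊙ t is a kernel: it is monotone (s ≤ t implies O(s) ≤ O(t)), contractive (O(t) ≤ t for all t), and idempotent (O(O(t)) = O(t) for all t). -/
/-!
Monotonicity of `O` is inherited from that of `⊙`, and `O(t) ≤ 1_⊙ ⊙ t = t`. For idempotence
it suffices that `O(t) ≤ s ⊙ O(t)` for every `s > 0`. For finite `s`, continuity of `s ⊙ ·` moves
the infimum inside: `s ⊙ O(t) = inf_u (s ⊙ u) ⊙ t`, and each `s ⊙ u` is again positive since `⊙`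
has no zero divisors. An infinite `s` is reduced to `min s 1` by monotonicity.
-/

open Set Filter Topology
open scoped ENNReal

/-- A pseudo-multiplication on `[0,∞]`. -/
structure PseudoMul where
  mul : ℝ≥0∞ → ℝ≥0∞ → ℝ≥0∞
  assoc : ∀ a b c, mul (mul a b) c = mul a (mul b c)
  continuousOn : ContinuousOn (fun p : ℝ≥0∞ × ℝ≥0∞ => mul p.1 p.2) (Ioo 0 ⊤ ×ˢ univ)
  continuousOn_left : ∀ t, ContinuousOn (fun s => mul s t) (Ioi 0)
  mono : ∀ ⦃a b : ℝ≥0∞⦄, a ≤ b → ∀ ⦃c d : ℝ≥0∞⦄, c ≤ d → mul a c ≤ mul b d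
  one : ℝ≥0∞
  one_mul : ∀ t, mul one t = t
  eq_zero_of_mul : ∀ s t, mul s t = 0 → s = 0 ∨ t = 0
  zero_mul : ∀ t, mul 0 t = 0
  mul_zero : ∀ t, mul t 0 = 0

/-- The kernel `O(t) = ⨅_{s>0} s ⊙ t`. -/
noncomputable def PseudoMul.O (P : PseudoMul) (t : ℝ≥0∞) : ℝ≥0∞ :=
  ⨅ s ∈ Ioi (0 : ℝ≥0∞), P.mul s t

namespace PseudoMul

variable (P : PseudoMul)

lemma one_pos : 0 < P.one := by
  refine pos_iff_ne_zero.2 fun h => ?_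
  have h1 := P.one_mul 1
  rw [h, P.zero_mul] at h1
  exact zero_ne_one h1

lemma mul_pos {s t : ℝ≥0∞} (hs : 0 < s) (ht : 0 < t) : 0 < P.mul s t :=
  pos_iff_ne_zero.2 fun h => (P.eq_zero_of_mul s t h).elim hs.ne' ht.ne'

lemma monotone_mul_left (s : ℝ≥0∞) : Monotone (P.mul s) := fun _ _ h => P.mono le_rfl h

lemma continuousAt_mul_left {s : ℝ≥0∞} (hs : s ∈ Ioo 0 ⊤) (t : ℝ≥0∞) :
    ContinuousAt (P.mul s) t :=
  (P.continuousOn.continuousAt ((isOpen_Ioo.prod isOpen_univ).mem_nhds ⟨hs, mem_univ t⟩)).comp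
    (continuous_const.prodMk continuous_id).continuousAt

lemma O_eq_iInf_subtype (t : ℝ≥0∞) : P.O t = ⨅ s : Ioi (0 : ℝ≥0∞), P.mul s t := by
  rw [O, iInf_subtype']

lemma O_le_mul {s : ℝ≥0∞} (hs : 0 < s) (t : ℝ≥0∞) : P.O t ≤ P.mul s t := iInf₂_le s hs

lemma O_mono : Monotone P.O := fun _ _ h => iInf₂_mono fun s _ => P.monotone_mul_left s h

lemma O_le (t : ℝ≥0∞) : P.O t ≤ t := (P.O_le_mul P.one_pos t).trans_eq (P.one_mul t)

lemma mul_O_eq_iInf {s : ℝ≥0∞} (hs : s ∈ Ioo 0 ⊤) (t : ℝ≥0∞) :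
    P.mul s (P.O t) = ⨅ u : Ioi (0 : ℝ≥0∞), P.mul (P.mul s u) t := by
  have : Nonempty (Ioi (0 : ℝ≥0∞)) := ⟨⟨1, mem_Ioi.2 zero_lt_one⟩⟩
  rw [O_eq_iInf_subtype, Monotone.map_ciInf_of_continuousAt (P.continuousAt_mul_left hs _)
    (P.monotone_mul_left s)]
  simp only [P.assoc]

lemma O_le_mul_O {s : ℝ≥0∞} (hs : 0 < s) (t : ℝ≥0∞) : P.O t ≤ P.mul s (P.O t) := by
  have hs' : min s 1 ∈ Ioo 0 ⊤ :=
    ⟨lt_min hs zero_lt_one, (min_le_right s 1).trans_lt ENNReal.one_lt_top⟩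
  calc P.O t ≤ ⨅ u : Ioi (0 : ℝ≥0∞), P.mul (P.mul (min s 1) u) t :=
        le_iInf fun u => P.O_le_mul (P.mul_pos hs'.1 u.2) t
    _ = P.mul (min s 1) (P.O t) := (P.mul_O_eq_iInf hs' t).symm
    _ ≤ P.mul s (P.O t) := P.mono (min_le_left s 1) le_rfl

lemma O_O (t : ℝ≥0∞) : P.O (P.O t) = P.O t :=
  le_antisymm (P.O_le _) (le_iInf₂ fun _ hs => P.O_le_mul_O hs t)

end PseudoMul

theorem kernel_properties (P : PseudoMul) :
    (∀ ⦃s t : ℝ≥0∞⦄, s ≤ t → P.O s ≤ P.O t) ∧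
    (∀ t : ℝ≥0∞, P.O t ≤ t) ∧
    (∀ t : ℝ≥0∞, P.O (P.O t) = P.O t) :=
  ⟨P.O_mono, P.O_le, P.O_O⟩
end

section
/- If a pseudo-multiplication ⊙ is non-degenerate (O(1_⊙) = 0), then ⊙ is jointly continuous on [0, 1_⊙] × [0, 1_⊙]; in particular, if s_n → 0 and t_n → t in [0, 1_⊙], then s_n ⊙ t_n → 0. -/
open Set Filter Topology
open scoped ENNReal

namespace PseudoMul

variable (P : PseudoMul)

theorem exists_pos_mul_one_lt (hnd : P.O P.one = 0) {ε : ℝ≥0∞} (hε : 0 < ε) :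
    ∃ s₀, 0 < s₀ ∧ P.mul s₀ P.one < ε := by
  rw [← hnd, PseudoMul.O] at hε
  simpa only [iInf_lt_iff, mem_Ioi, exists_prop] using hε

/-- Near `s = 0` the product is bounded by `s₀ ⊙ 1` by monotonicity, and non-degeneracy makes
`s₀ ⊙ 1` arbitrarily small. -/
theorem continuousWithinAt_zero_left (hnd : P.O P.one = 0) (t : ℝ≥0∞) :
    ContinuousWithinAt (Function.uncurry P.mul) (univ ×ˢ Iic P.one) (0, t) := by
  rw [ContinuousWithinAt, Function.uncurry_apply_pair, P.zero_mul, ENNReal.tendsto_nhds_zero]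
  intro ε hε
  obtain ⟨s₀, hs₀, hs₀ε⟩ := P.exists_pos_mul_one_lt hnd hε
  have hfst : ∀ᶠ q : ℝ≥0∞ × ℝ≥0∞ in 𝓝[univ ×ˢ Iic P.one] (0, t), q.1 < s₀ :=
    nhdsWithin_le_nhds (continuousAt_fst.eventually_lt continuousAt_const hs₀)
  filter_upwards [hfst, self_mem_nhdsWithin] with q hq hmem
  exact (P.mono hq.le hmem.2).trans hs₀ε.le

theorem continuousAt_of_fst_mem_Ioo {p : ℝ≥0∞ × ℝ≥0∞} (hp : p.1 ∈ Ioo 0 ⊤) :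
    ContinuousAt (Function.uncurry P.mul) p :=
  P.continuousOn.continuousAt ((isOpen_Ioo.prod isOpen_univ).mem_nhds ⟨hp, mem_univ _⟩)

theorem top_mul (h : P.one = ⊤) (t : ℝ≥0∞) : P.mul ⊤ t = t :=
  h ▸ P.one_mul t

theorem tendsto_mul_right_top (h : P.one = ⊤) (t : ℝ≥0∞) :
    Tendsto (fun s => P.mul s t) (𝓝 ⊤) (𝓝 t) := by
  have := ((P.continuousOn_left t).continuousAt (Ioi_mem_nhds ENNReal.zero_lt_top)).tendsto
  rwa [P.top_mul h] at this

/-- When `1 = ⊤` we have `s ⊙ t ≤ ⊤ ⊙ t = t`, and from below `s ⊙ t ≥ s ⊙ t₁ → t₁` for any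
`t₁ < t`. -/
theorem continuousAt_top_left (h : P.one = ⊤) (t : ℝ≥0∞) :
    ContinuousAt (Function.uncurry P.mul) (⊤, t) := by
  rw [ContinuousAt, Function.uncurry_apply_pair, P.top_mul h, tendsto_order]
  constructor
  · intro a hat
    obtain ⟨t₁, hat₁, ht₁t⟩ := exists_between hat
    have hmul := (P.tendsto_mul_right_top h t₁).eventually_const_lt hat₁
    have hfst : ∀ᶠ q : ℝ≥0∞ × ℝ≥0∞ in 𝓝 (⊤, t), a < P.mul q.1 t₁ :=
      (continuousAt_fst (p := ((⊤ : ℝ≥0∞), t))).eventually hmul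
    have hsnd : ∀ᶠ q : ℝ≥0∞ × ℝ≥0∞ in 𝓝 (⊤, t), t₁ < q.2 :=
      continuousAt_snd.eventually_const_lt ht₁t
    filter_upwards [hfst, hsnd] with q hq₁ hq₂
    exact hq₁.trans_le (P.mono le_rfl hq₂.le)
  · intro b htb
    filter_upwards [continuousAt_snd.eventually_lt_const htb] with q hq
    calc P.mul q.1 q.2 ≤ P.mul ⊤ q.2 := P.mono le_top le_rfl
      _ = q.2 := P.top_mul h q.2
      _ < b := hq

theorem continuousOn_Icc (hnd : P.O P.one = 0) :
    ContinuousOn (Function.uncurry P.mul) (Icc 0 P.one ×ˢ Icc 0 P.one) := by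
  rintro ⟨s, t⟩ ⟨hs, ht⟩
  rcases eq_zero_or_pos s with rfl | hs₀
  · exact (P.continuousWithinAt_zero_left hnd t).mono
      (prod_mono (subset_univ _) Icc_subset_Iic_self)
  rcases eq_top_or_lt_top s with rfl | hs_top
  · exact (P.continuousAt_top_left (top_le_iff.mp hs.2) t).continuousWithinAt
  · exact (P.continuousAt_of_fst_mem_Ioo ⟨hs₀, hs_top⟩).continuousWithinAt

end PseudoMul

theorem continuous_of_nondegenerate (P : PseudoMul) (hnd : P.O P.one = 0) :
    ContinuousOn (fun p : ℝ≥0∞ × ℝ≥0∞ => P.mul p.1 p.2) (Icc 0 P.one ×ˢ Icc 0 P.one) ∧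
    ∀ (s t : ℕ → ℝ≥0∞) (t₀ : ℝ≥0∞),
      (∀ n, s n ∈ Icc 0 P.one) → (∀ n, t n ∈ Icc 0 P.one) →
      Tendsto s atTop (𝓝 0) → Tendsto t atTop (𝓝 t₀) →
      Tendsto (fun n => P.mul (s n) (t n)) atTop (𝓝 0) := by
  have hcont := P.continuousOn_Icc hnd
  refine ⟨hcont, fun s t t₀ hs ht hs0 ht₀ => ?_⟩
  have ht₀_mem : t₀ ∈ Icc 0 P.one := isClosed_Icc.mem_of_tendsto ht₀ (Eventually.of_forall ht)
  have hlim := (hcont (0, t₀) ⟨left_mem_Icc.mpr zero_le, ht₀_mem⟩).tendsto.comp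
    (tendsto_nhdsWithin_iff.mpr ⟨hs0.prodMk_nhds ht₀, Eventually.of_forall fun n => ⟨hs n, ht n⟩⟩)
  simpa only [Function.comp_def, Function.uncurry_apply_pair, P.zero_mul] using hlim
end

section
/- A pseudo-multiplication ⊙ is non-degenerate if and only if the restriction of ⊙ to [0, 1_⊙] is commutative (i.e., s ⊙ t = t ⊙ s for all s, t ∈ [0, 1_⊙]). -/
open Set Filter Topology
open scoped ENNReal

/-!
Non-degeneracy makes `s ↦ s ⊙ t` continuous at `0` for `t ≤ 1_⊙`, so by the intermediate value
theorem `1_⊙` is a two-sided identity on `[0, 1_⊙]`, every idempotent `e ≤ 1_⊙` is a two-sided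
identity on `[0, e]`, and every `c ≤ 1_⊙` has a square root. Let `x ≤ y ≤ 1_⊙`. If an idempotent
`e` lies in `[x, y]`, then `x ⊙ y = x = y ⊙ x`. Otherwise the iterated square roots `d n` of `y`
increase to an idempotent `β ≥ y`, while the powers of each `d n` decrease below `x`. Hence `x` is
the infimum of those powers of the `d n` that lie above `x`; they all commute with `y`, which is
itself a power of every `d n`, and commutativity passes to the limit.
Conversely, commutativity gives `s ⊙ 1_⊙ = s`, so `O(1_⊙) = 0`.
-/

namespace PseudoMul

variable (P : PseudoMul) {s t x y : ℝ≥0∞}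

lemma one_ne_zero : P.one ≠ 0 := fun h => by
  simpa [h, P.zero_mul] using P.one_mul 1

lemma continuousAt_mul {p : ℝ≥0∞ × ℝ≥0∞} (hp0 : p.1 ≠ 0) (hpT : p.1 ≠ ⊤) :
    ContinuousAt (fun q : ℝ≥0∞ × ℝ≥0∞ => P.mul q.1 q.2) p :=
  P.continuousOn.continuousAt ((isOpen_Ioo.prod isOpen_univ).mem_nhds
    ⟨⟨pos_iff_ne_zero.2 hp0, lt_top_iff_ne_top.2 hpT⟩, mem_univ _⟩)

lemma continuous_mul_left (hs0 : s ≠ 0) (hsT : s ≠ ⊤) : Continuous (P.mul s) :=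
  continuous_iff_continuousAt.2 fun _ =>
    (P.continuousAt_mul hs0 hsT).comp (continuous_const.prodMk continuous_id).continuousAt

lemma continuousAt_mul_right (hs : s ≠ 0) : ContinuousAt (P.mul · t) s :=
  (P.continuousOn_left t).continuousAt (isOpen_Ioi.mem_nhds (pos_iff_ne_zero.2 hs))

lemma mul_self_eq_of_tendsto {α : Type*} {l : Filter α} [l.NeBot] {u v : α → ℝ≥0∞} {L : ℝ≥0∞}
    (hL : L ≤ P.one) (hu : Tendsto u l (𝓝 L)) (hv : Tendsto v l (𝓝 L))
    (huv : ∀ a, P.mul (u a) (u a) = v a) : P.mul L L = L := by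
  rcases eq_or_ne L 0 with rfl | hL0
  · exact P.zero_mul 0
  rcases eq_or_ne L ⊤ with rfl | hLT
  · rw [← top_le_iff.1 hL, P.one_mul]
  refine tendsto_nhds_unique ?_ hv
  have h := (P.continuousAt_mul (p := (L, L)) hL0 hLT).tendsto.comp (hu.prodMk_nhds hu)
  simpa only [Function.comp_def, huv] using h

lemma continuousAt_mul_self_top (h : P.one = ⊤) : ContinuousAt (fun t => P.mul t t) ⊤ := by
  have htop : P.mul ⊤ ⊤ = ⊤ := by rw [← h, P.one_mul]
  rw [ContinuousAt, htop]
  refine tendsto_order.2 ⟨fun a ha => ?_, fun a ha => absurd ha not_top_lt⟩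
  obtain ⟨b, hab, hb⟩ := exists_between ha
  have hlim : Tendsto (P.mul · b) (𝓝 ⊤) (𝓝 b) := by
    simpa only [← h, P.one_mul] using
      (P.continuousAt_mul_right (t := b) ENNReal.top_ne_zero).tendsto
  filter_upwards [hlim.eventually (lt_mem_nhds hab), Ioi_mem_nhds hb] with t hat hbt
  exact hat.trans_le (P.mono le_rfl hbt.le)

lemma O_one_eq_zero (h : ∀ s ≤ P.one, P.mul s P.one = s) : P.O P.one = 0 := by
  refine le_antisymm (le_of_forall_gt_imp_ge_of_dense fun ε hε => ?_) zero_le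
  calc P.O P.one ≤ P.mul (min ε P.one) P.one :=
        iInf₂_le _ (lt_min hε (pos_iff_ne_zero.2 P.one_ne_zero))
    _ = min ε P.one := h _ (min_le_right _ _)
    _ ≤ ε := min_le_left _ _

section Pow

def pow (c : ℝ≥0∞) : ℕ → ℝ≥0∞
  | 0 => P.one
  | n + 1 => P.mul c (pow c n)

variable {P} {c : ℝ≥0∞}

lemma pow_add (j k : ℕ) : P.mul (P.pow c j) (P.pow c k) = P.pow c (j + k) := by
  induction j with
  | zero => simp only [pow, P.one_mul, Nat.zero_add]
  | succ j ih => rw [Nat.succ_add, pow, pow, P.assoc, ih]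

lemma pow_mul_pow_comm (j k : ℕ) :
    P.mul (P.pow c j) (P.pow c k) = P.mul (P.pow c k) (P.pow c j) := by
  rw [pow_add, pow_add, Nat.add_comm]

lemma pow_two_mul {d : ℝ≥0∞} (hd : P.mul d d = c) (k : ℕ) : P.pow d (2 * k) = P.pow c k := by
  induction k with
  | zero => rfl
  | succ k ih => rw [Nat.mul_succ, pow, pow, ← P.assoc, hd, ih, pow]

lemma pow_two_pow_of_sqrt {d : ℕ → ℝ≥0∞} (hdd : ∀ n, P.mul (d (n + 1)) (d (n + 1)) = d n)
    (n : ℕ) : P.pow (d n) (2 ^ n) = P.pow (d 0) 1 := by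
  induction n with
  | zero => rfl
  | succ n ih => rw [pow_succ', pow_two_mul (hdd n), ih]

lemma pow_antitone (hc : c ≤ P.one) : Antitone (P.pow c) :=
  antitone_nat_of_succ_le fun _ => (P.mono hc le_rfl).trans_eq (P.one_mul _)

lemma mul_iInf_pow_self (hc : c ≤ P.one) :
    P.mul (⨅ k, P.pow c k) (⨅ k, P.pow c k) = ⨅ k, P.pow c k := by
  have hlim := tendsto_atTop_iInf (pow_antitone hc)
  exact P.mul_self_eq_of_tendsto (iInf_le _ 0) hlim
    (hlim.comp (tendsto_id.const_mul_atTop' two_pos)) fun k => by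
      rw [pow_add, Function.comp_apply, id, two_mul]

lemma exists_pow_succ_lt_le (hx : x ≤ P.one) (h : ∃ k, P.pow c k < x) :
    ∃ k, x ≤ P.pow c k ∧ P.pow c (k + 1) < x := by
  classical
  obtain ⟨k, hk⟩ : ∃ k, Nat.find h = k + 1 :=
    Nat.exists_eq_succ_of_ne_zero fun h0 => (Nat.find_spec h).not_ge (h0 ▸ hx)
  exact ⟨k, not_lt.1 (Nat.find_min h (hk ▸ k.lt_succ_self)), hk ▸ Nat.find_spec h⟩

end Pow

section Nondegenerate

variable {P}

lemma tendsto_mul_right_nhds_zero (hO : P.O P.one = 0) (ht : t ≤ P.one) :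
    Tendsto (P.mul · t) (𝓝 0) (𝓝 0) := by
  refine ENNReal.tendsto_nhds_zero.2 fun ε hε => ?_
  obtain ⟨s, hs, hsε⟩ : ∃ s > 0, P.mul s P.one < ε := by
    simpa only [O, iInf_lt_iff, mem_Ioi, exists_prop] using hO.trans_lt hε
  filter_upwards [Iio_mem_nhds hs] with r hr
  exact (P.mono hr.le ht).trans hsε.le

lemma continuous_mul_right (hO : P.O P.one = 0) (ht : t ≤ P.one) : Continuous (P.mul · t) := by
  refine continuous_iff_continuousAt.2 fun s => ?_
  rcases eq_or_ne s 0 with rfl | hs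
  · simpa only [ContinuousAt, P.zero_mul] using tendsto_mul_right_nhds_zero hO ht
  · exact P.continuousAt_mul_right hs

lemma exists_mul_right_eq (hO : P.O P.one = 0) (ht : t ≤ P.one) (hx : x ≤ t) :
    ∃ u, P.mul u t = x := by
  have hivt :=
    intermediate_value_Icc (zero_le : 0 ≤ P.one) (continuous_mul_right hO ht).continuousOn
  simp only [P.zero_mul, P.one_mul] at hivt
  obtain ⟨u, -, hu⟩ := hivt ⟨zero_le, hx⟩
  exact ⟨u, hu⟩

lemma mul_idempotent_of_le (hO : P.O P.one = 0) {e : ℝ≥0∞} (he : e ≤ P.one)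
    (hee : P.mul e e = e) (hx : x ≤ e) : P.mul x e = x := by
  obtain ⟨u, rfl⟩ := exists_mul_right_eq hO he hx
  rw [P.assoc, hee]

lemma mul_one (hO : P.O P.one = 0) (ht : t ≤ P.one) : P.mul t P.one = t :=
  mul_idempotent_of_le hO le_rfl (P.one_mul _) ht

lemma idempotent_mul_of_le (hO : P.O P.one = 0) {e : ℝ≥0∞} (he : e ≤ P.one)
    (hee : P.mul e e = e) (hx : x ≤ e) : P.mul e x = x := by
  rcases eq_or_ne e 0 with rfl | he0
  · rw [nonpos_iff_eq_zero.1 hx, P.mul_zero]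
  rcases eq_or_ne e ⊤ with rfl | heT
  · rw [← top_le_iff.1 he, P.one_mul]
  have hivt :=
    intermediate_value_Icc (zero_le : 0 ≤ P.one) (P.continuous_mul_left he0 heT).continuousOn
  simp only [P.mul_zero, mul_one hO he] at hivt
  obtain ⟨u, -, rfl⟩ := hivt ⟨zero_le, hx⟩
  rw [← P.assoc, hee]

lemma mul_comm_of_idempotent_between (hO : P.O P.one = 0) {e : ℝ≥0∞} (hee : P.mul e e = e)
    (hxe : x ≤ e) (hey : e ≤ y) (hy : y ≤ P.one) : P.mul x y = P.mul y x := by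
  have he : e ≤ P.one := hey.trans hy
  calc P.mul x y = x :=
        le_antisymm ((P.mono le_rfl hy).trans_eq (mul_one hO (hxe.trans he)))
          ((mul_idempotent_of_le hO he hee hxe).symm.trans_le (P.mono le_rfl hey))
    _ = P.mul y x :=
        le_antisymm ((idempotent_mul_of_le hO he hee hxe).symm.trans_le (P.mono hey le_rfl))
          ((P.mono hy le_rfl).trans_eq (P.one_mul x))

lemma continuousOn_mul_self (hO : P.O P.one = 0) :
    ContinuousOn (fun t => P.mul t t) (Icc 0 P.one) := by
  intro t ht
  rcases eq_or_ne t 0 with rfl | ht0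
  · rw [ContinuousWithinAt, P.zero_mul]
    refine tendsto_of_tendsto_of_tendsto_of_le_of_le' tendsto_const_nhds
      ((tendsto_mul_right_nhds_zero hO le_rfl).mono_left nhdsWithin_le_nhds)
      (Eventually.of_forall fun _ => zero_le) ?_
    filter_upwards [self_mem_nhdsWithin] with s hs using P.mono le_rfl hs.2
  rcases eq_or_ne t ⊤ with rfl | htT
  · exact (P.continuousAt_mul_self_top (top_le_iff.1 ht.2)).continuousWithinAt
  · exact ((P.continuousAt_mul (p := (t, t)) ht0 htT).comp
      (f := fun s => (s, s)) (continuousAt_id.prodMk continuousAt_id)).continuousWithinAt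

lemma exists_mul_self_eq (hO : P.O P.one = 0) {c : ℝ≥0∞} (hc : c ≤ P.one) :
    ∃ d ≤ P.one, P.mul d d = c := by
  have hivt := intermediate_value_Icc (zero_le : 0 ≤ P.one) (continuousOn_mul_self hO)
  simp only [P.zero_mul, P.one_mul] at hivt
  obtain ⟨d, hd, rfl⟩ := hivt ⟨zero_le, hc⟩
  exact ⟨d, hd.2, rfl⟩

lemma exists_seq_sqrt (hO : P.O P.one = 0) (hy : y ≤ P.one) :
    ∃ d : ℕ → ℝ≥0∞, d 0 = y ∧ (∀ n, d n ≤ P.one) ∧ ∀ n, P.mul (d (n + 1)) (d (n + 1)) = d n := by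
  choose! r hr1 hr using fun c (hc : c ≤ P.one) => exists_mul_self_eq hO hc
  have hd1 : ∀ n, r^[n] y ≤ P.one := fun n => by
    induction n with
    | zero => exact hy
    | succ n ih => rw [Function.iterate_succ_apply']; exact hr1 _ ih
  exact ⟨fun n => r^[n] y, rfl, hd1, fun n => by
    simp only [Function.iterate_succ_apply']; exact hr _ (hd1 n)⟩

lemma monotone_of_sqrt (hO : P.O P.one = 0) {d : ℕ → ℝ≥0∞} (hd1 : ∀ n, d n ≤ P.one)
    (hdd : ∀ n, P.mul (d (n + 1)) (d (n + 1)) = d n) : Monotone d :=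
  monotone_nat_of_le_succ fun n =>
    calc d n = P.mul (d (n + 1)) (d (n + 1)) := (hdd n).symm
      _ ≤ P.mul (d (n + 1)) P.one := P.mono le_rfl (hd1 _)
      _ = d (n + 1) := mul_one hO (hd1 _)

lemma mul_comm_of_forall_not_idempotent (hO : P.O P.one = 0) (hxy : x ≤ y) (hy : y ≤ P.one)
    (hE : ∀ e, x ≤ e → e ≤ y → P.mul e e ≠ e) : P.mul x y = P.mul y x := by
  obtain ⟨d, hd0, hd1, hdd⟩ := exists_seq_sqrt hO hy
  have hdy : ∀ n, P.pow (d n) (2 ^ n) = y := fun n => by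
    rw [pow_two_pow_of_sqrt hdd, hd0]
    exact mul_one hO hy
  have hdβ := tendsto_atTop_iSup (monotone_of_sqrt hO hd1 hdd)
  set β := ⨆ n, d n
  have hβ1 : β ≤ P.one := iSup_le hd1
  have hyβ : y ≤ β := hd0 ▸ le_iSup d 0
  have hβ : P.mul β β = β :=
    P.mul_self_eq_of_tendsto hβ1 (hdβ.comp (tendsto_add_atTop_nat 1)) hdβ hdd
  have hy0 : y ≠ 0 := fun h => hE 0 (h ▸ hxy) zero_le (P.zero_mul 0)
  have hyT : y ≠ ⊤ := fun h => hE P.one (hxy.trans hy) (h ▸ le_top) (P.one_mul _)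
  -- otherwise the infimum of the powers of `d n` would be an idempotent in `[x, y]`
  have hbelow : ∀ n, ∃ k, P.pow (d n) k < x := fun n => by
    by_contra! h
    exact hE _ (le_iInf h) ((iInf_le _ _).trans_eq (hdy n)) (mul_iInf_pow_self (hd1 n))
  set A := {p | (∃ n k, P.pow (d n) k = p) ∧ x ≤ p}
  have hyA : y ∈ A := ⟨⟨0, 1, hdy 0⟩, hxy⟩
  -- `d n ⊙ sInf A ≤ x` for every `n`, while `d n ⊙ sInf A → β ⊙ sInf A = sInf A`
  have hAx : sInf A ≤ x := by
    have hle : ∀ n, P.mul (d n) (sInf A) ≤ x := fun n => by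
      obtain ⟨k, hxk, hk⟩ := exists_pow_succ_lt_le (hxy.trans hy) (hbelow n)
      have hAk : P.pow (d n) k ∈ A := ⟨⟨n, k, rfl⟩, hxk⟩
      exact (P.mono le_rfl (sInf_le hAk)).trans hk.le
    have hlim := (P.continuousAt_mul_right (t := sInf A)
      ((pos_iff_ne_zero.2 hy0).trans_le hyβ).ne').tendsto.comp hdβ
    rw [idempotent_mul_of_le hO hβ1 hβ ((sInf_le hyA).trans hyβ)] at hlim
    exact le_of_tendsto' hlim hle
  have hAcomm : A ⊆ {p | P.mul p y = P.mul y p} := by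
    rintro _ ⟨⟨n, k, rfl⟩, -⟩
    rw [mem_ofPred_eq, ← hdy n]
    exact pow_mul_pow_comm _ _
  have hclosed : IsClosed {p | P.mul p y = P.mul y p} :=
    isClosed_eq (continuous_mul_right hO hy) (P.continuous_mul_left hy0 hyT)
  rw [le_antisymm (le_sInf fun _ hp => hp.2) hAx]
  exact closure_minimal hAcomm hclosed (sInf_mem_closure ⟨y, hyA⟩)

lemma mul_comm_of_le (hO : P.O P.one = 0) (hxy : x ≤ y) (hy : y ≤ P.one) :
    P.mul x y = P.mul y x := by
  by_cases hE : ∃ e, x ≤ e ∧ e ≤ y ∧ P.mul e e = e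
  · obtain ⟨e, hxe, hey, hee⟩ := hE
    exact mul_comm_of_idempotent_between hO hee hxe hey hy
  · exact mul_comm_of_forall_not_idempotent hO hxy hy fun e hxe hey hee => hE ⟨e, hxe, hey, hee⟩

end Nondegenerate

end PseudoMul

theorem nondegenerate_iff_commutative (P : PseudoMul) :
    P.O P.one = 0 ↔
    ∀ s ∈ Icc 0 P.one, ∀ t ∈ Icc 0 P.one, P.mul s t = P.mul t s := by
  refine ⟨fun hO s hs t ht => ?_, fun hcomm => P.O_one_eq_zero fun s hs => ?_⟩
  · rcases le_total s t with h | h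
    · exact PseudoMul.mul_comm_of_le hO h ht.2
    · exact (PseudoMul.mul_comm_of_le hO h hs.2).symm
  · rw [hcomm s ⟨zero_le, hs⟩ P.one ⟨zero_le, le_rfl⟩, P.one_mul]
end
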